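/- arXiv:2308.12042 — 4 statements merged into one kernel-verified Lean document; each statement's English description precedes it below -/
import Mathlib

section
/- Let ν be an outer measure on a metric space X and define integration of nonnegative Borel functions by Cavalieri's formula ∫_X f dν := ∫₀^∞ ν({f ≥ t}) dt. If ν is submodular, i.e. ν(E∪F) + ν(E∩F) ≤ ν(E) + ν(F) for all Borel E, F, then the integral is subadditive: ∫_X (f+g) dν ≤ ∫_X f dν + ∫_X g dν for all Borel f, g : X → [0,∞]. -/
/-!
Fix a mesh `ε > 0`. For measurable sets `L₁, …, Lₙ` with counting function
`c x = #{i | x ∈ Lᵢ}`, submodularity gives `∑ₘ ν {c > m} ≤ ∑ᵢ ν Lᵢ`: adding a set `L` to the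
family turns the superlevel sets `Gₘ = {c ≥ m}` into `Gₘ₊₁ ∪ (L ∩ Gₘ)`, and submodularity
telescopes along this chain. For the sets `{f ≥ (i+1)ε}` and `{g ≥ (i+1)ε}` the counting
function is (a truncation of) `⌊f/ε⌋ + ⌊g/ε⌋ ≥ ⌊(f+g)/ε⌋ - 1`, so an upper Riemann sum of
`t ↦ ν {f + g ≥ t}` over `(2ε, ∞)` is bounded by lower Riemann sums of the distribution functions
of `f` and `g`. Distribution functions are antitone, so Riemann sums compare with the integrals,
and `ε → 0` concludes; no continuity of `ν` is needed.
-/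

open MeasureTheory ENNReal

/-- The Cavalieri integral `∫_X f dν := ∫₀^∞ ν({f ≥ t}) dt` of a nonnegative function
with respect to an outer measure `ν`. -/
noncomputable def cavalieriIntegral {X : Type*} (ν : OuterMeasure X) (f : X → ℝ≥0∞) : ℝ≥0∞ :=
  ∫⁻ t in Set.Ioi (0 : ℝ), ν {x | ENNReal.ofReal t ≤ f x}

open Set
open scoped Finset

theorem Antitone.not_apply_card_filter_range {P : ℕ → Prop} [DecidablePred P] (hP : Antitone P)
    {N : ℕ} (hN : #{i ∈ Finset.range N | P i} < N) : ¬ P #{i ∈ Finset.range N | P i} := by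
  set a := #{i ∈ Finset.range N | P i}
  intro ha
  have hsub : Finset.range (a + 1) ⊆ {i ∈ Finset.range N | P i} := fun i hi => by
    rw [Finset.mem_range] at hi
    exact Finset.mem_filter.2 ⟨Finset.mem_range.2 (by omega), hP (Nat.lt_succ_iff.1 hi) ha⟩
  have := Finset.card_le_card hsub
  simp only [Finset.card_range] at this
  omega

theorem lt_ofReal_card_filter_add_one_mul {ε : ℝ} (hε : 0 ≤ ε) {y : ℝ≥0∞} {N : ℕ}
    (hN : #{i ∈ Finset.range N | ENNReal.ofReal ((i + 1 : ℕ) * ε) ≤ y} < N) :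
    y < ENNReal.ofReal
      ((#{i ∈ Finset.range N | ENNReal.ofReal ((i + 1 : ℕ) * ε) ≤ y} + 1 : ℕ) * ε) := by
  refine not_le.1 (Antitone.not_apply_card_filter_range (fun i j hij hj => ?_) hN)
  exact (ENNReal.ofReal_le_ofReal (by gcongr)).trans hj

theorem succ_le_card_filter_add_card_filter {ε : ℝ} (hε : 0 ≤ ε) {y z : ℝ≥0∞} {k N : ℕ}
    (hk : k < N) (h : ENNReal.ofReal ((k + 2) * ε) ≤ y + z) :
    k + 1 ≤ #{i ∈ Finset.range N | ENNReal.ofReal ((i + 1 : ℕ) * ε) ≤ y} +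
      #{i ∈ Finset.range N | ENNReal.ofReal ((i + 1 : ℕ) * ε) ≤ z} := by
  set a := #{i ∈ Finset.range N | ENNReal.ofReal ((i + 1 : ℕ) * ε) ≤ y}
  set b := #{i ∈ Finset.range N | ENNReal.ofReal ((i + 1 : ℕ) * ε) ≤ z}
  by_contra! hab
  have hy : y < ENNReal.ofReal ((a + 1 : ℕ) * ε) := lt_ofReal_card_filter_add_one_mul hε (by omega)
  have hz : z < ENNReal.ofReal ((b + 1 : ℕ) * ε) := lt_ofReal_card_filter_add_one_mul hε (by omega)
  have hle : ((a + 1 : ℕ) : ℝ) * ε + (b + 1 : ℕ) * ε ≤ (k + 2) * ε := by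
    have : (a : ℝ) + b ≤ k := by exact_mod_cast Nat.lt_succ_iff.1 hab
    push_cast
    nlinarith
  refine (h.trans_lt ?_).false
  calc y + z < ENNReal.ofReal ((a + 1 : ℕ) * ε) + ENNReal.ofReal ((b + 1 : ℕ) * ε) :=
        ENNReal.add_lt_add hy hz
    _ = ENNReal.ofReal ((a + 1 : ℕ) * ε + (b + 1 : ℕ) * ε) :=
        (ENNReal.ofReal_add (by positivity) (by positivity)).symm
    _ ≤ ENNReal.ofReal ((k + 2) * ε) := ENNReal.ofReal_le_ofReal hle

section Submodular

variable {X : Type*} [MeasurableSpace X]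

def SubmodularOnMeasurableSets (μ : Set X → ℝ≥0∞) : Prop :=
  ∀ E F : Set X, MeasurableSet E → MeasurableSet F → μ (E ∪ F) + μ (E ∩ F) ≤ μ E + μ F

theorem SubmodularOnMeasurableSets.sum_union_inter_add_le {μ : Set X → ℝ≥0∞}
    (hμ : SubmodularOnMeasurableSets μ) {F : Set X} {G : ℕ → Set X} (hF : MeasurableSet F)
    (hG : ∀ m, MeasurableSet (G m)) (hGa : Antitone G) (q : ℕ) :
    ∑ m ∈ Finset.range q, μ (G (m + 1) ∪ F ∩ G m) + μ (F ∩ G q) ≤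
      μ (F ∩ G 0) + ∑ m ∈ Finset.range q, μ (G (m + 1)) := by
  induction q with
  | zero => simp
  | succ q ih =>
    have hstep := hμ (G (q + 1)) (F ∩ G q) (hG _) (hF.inter (hG q))
    rw [inter_left_comm, inter_eq_left.2 (hGa q.le_succ)] at hstep
    set S := ∑ m ∈ Finset.range q, μ (G (m + 1) ∪ F ∩ G m)
    simp only [Finset.sum_range_succ]
    calc S + μ (G (q + 1) ∪ F ∩ G q) + μ (F ∩ G (q + 1))
        ≤ S + (μ (G (q + 1)) + μ (F ∩ G q)) := by rw [add_assoc]; gcongr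
      _ = (S + μ (F ∩ G q)) + μ (G (q + 1)) := by ring
      _ ≤ _ := by grw [ih]; rw [add_assoc]

open scoped Classical in
theorem SubmodularOnMeasurableSets.sum_measure_succ_le_card_filter_le {ι : Type*}
    {ν : OuterMeasure X} (hν : SubmodularOnMeasurableSets ν) {L : ι → Set X}
    (hL : ∀ i, MeasurableSet (L i)) (s : Finset ι) (q : ℕ) :
    ∑ m ∈ Finset.range q, ν {x | m + 1 ≤ #{i ∈ s | x ∈ L i}} ≤ ∑ i ∈ s, ν (L i) := by
  induction s using Finset.induction_on with
  | empty => simp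
  | insert a s ha ih =>
    set G : ℕ → Set X := fun m => {x | m ≤ #{i ∈ s | x ∈ L i}}
    have hG : ∀ m, MeasurableSet (G m) := fun m => by
      refine measurableSet_le measurable_const ?_
      simp only [Finset.card_filter]
      exact Finset.measurable_sum _ fun i _ => Measurable.ite (hL i) measurable_const measurable_const
    have hinsert : ∀ m, {x | m + 1 ≤ #{i ∈ insert a s | x ∈ L i}} = G (m + 1) ∪ L a ∩ G m := by
      intro m
      ext x
      by_cases hx : x ∈ L a
      · simp [G, Finset.filter_insert, hx, ha]; omega
      · simp [G, Finset.filter_insert, hx]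
    calc ∑ m ∈ Finset.range q, ν {x | m + 1 ≤ #{i ∈ insert a s | x ∈ L i}}
        ≤ ∑ m ∈ Finset.range q, ν (G (m + 1) ∪ L a ∩ G m) + ν (L a ∩ G q) := by
          simp only [hinsert]; exact le_self_add
      _ ≤ ν (L a ∩ G 0) + ∑ m ∈ Finset.range q, ν (G (m + 1)) :=
          hν.sum_union_inter_add_le (hL a) hG (fun _ _ hmn _ hx => hmn.trans hx) q
      _ ≤ ν (L a) + ∑ i ∈ s, ν (L i) := add_le_add (measure_mono inter_subset_left) ih
      _ = ∑ i ∈ insert a s, ν (L i) := by rw [Finset.sum_insert ha]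

theorem SubmodularOnMeasurableSets.sum_measure_ofReal_le_add_le {ν : OuterMeasure X}
    (hν : SubmodularOnMeasurableSets ν) {f g : X → ℝ≥0∞} (hf : Measurable f)
    (hg : Measurable g) {ε : ℝ} (hε : 0 ≤ ε) (N : ℕ) :
    ∑ k ∈ Finset.range N, ν {x | ENNReal.ofReal ((k + 2) * ε) ≤ f x + g x} ≤
      ∑ i ∈ Finset.range N, ν {x | ENNReal.ofReal ((i + 1 : ℕ) * ε) ≤ f x} +
        ∑ i ∈ Finset.range N, ν {x | ENNReal.ofReal ((i + 1 : ℕ) * ε) ≤ g x} := by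
  classical
  set L : ℕ ⊕ ℕ → Set X := Sum.elim (fun i => {x | ENNReal.ofReal ((i + 1 : ℕ) * ε) ≤ f x})
    (fun i => {x | ENNReal.ofReal ((i + 1 : ℕ) * ε) ≤ g x})
  have hL : ∀ i, MeasurableSet (L i) := by
    rintro (i | i)
    exacts [measurableSet_le measurable_const hf, measurableSet_le measurable_const hg]
  calc ∑ k ∈ Finset.range N, ν {x | ENNReal.ofReal ((k + 2) * ε) ≤ f x + g x}
      ≤ ∑ k ∈ Finset.range N,
          ν {x | k + 1 ≤ #{i ∈ (Finset.range N).disjSum (Finset.range N) | x ∈ L i}} := by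
        refine Finset.sum_le_sum fun k hk => measure_mono fun x hx => ?_
        have := succ_le_card_filter_add_card_filter hε (Finset.mem_range.1 hk) hx
        simp only [Finset.card_filter, Finset.sum_disjSum, L, Sum.elim_inl, Sum.elim_inr,
          mem_ofPred_eq] at this ⊢
        -- the two sides differ only in their `Decidable` instances
        convert this using 3 <;> congr
    _ ≤ ∑ i ∈ (Finset.range N).disjSum (Finset.range N), ν (L i) := by
        convert hν.sum_measure_succ_le_card_filter_le hL _ N
    _ = _ := Finset.sum_disjSum _ _ _

end Submodular

theorem Monotone.setLIntegral_Ioi_eq_tsum {u : ℕ → ℝ} (hu : Monotone u)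
    (hu' : ¬ BddAbove (range u)) (h : ℝ → ℝ≥0∞) :
    ∫⁻ t in Ioi (u 0), h t = ∑' k, ∫⁻ t in Ioc (u k) (u (k + 1)), h t := by
  rw [show u 0 = u ⊥ from rfl, ← iUnion_Ioc_map_succ_eq_Ioi (fun k => hu k.zero_le) hu',
    lintegral_iUnion (fun _ => measurableSet_Ioc) hu.pairwise_disjoint_on_Ioc_succ]
  rfl

theorem setLIntegral_Ioi_eq_tsum_Ioc (c : ℝ) {ε : ℝ} (hε : 0 < ε) (h : ℝ → ℝ≥0∞) :
    ∫⁻ t in Ioi c, h t = ∑' k : ℕ, ∫⁻ t in Ioc (c + k * ε) (c + (k + 1 : ℕ) * ε), h t := by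
  have hu : Monotone fun k : ℕ => c + k * ε := fun i j hij => by dsimp only; gcongr
  have hu' : ¬ BddAbove (range fun k : ℕ => c + k * ε) := by
    rw [not_bddAbove_iff]
    intro b
    obtain ⟨k, hk⟩ := exists_nat_gt ((b - c) / ε)
    exact ⟨_, mem_range_self k, by rw [div_lt_iff₀ hε] at hk; linarith⟩
  simpa using hu.setLIntegral_Ioi_eq_tsum hu' h

theorem Antitone.ofReal_mul_le_setLIntegral_Ioc {h : ℝ → ℝ≥0∞} (hh : Antitone h) {a b : ℝ} :
    ENNReal.ofReal (b - a) * h b ≤ ∫⁻ t in Ioc a b, h t := by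
  calc ENNReal.ofReal (b - a) * h b = ∫⁻ _ in Ioc a b, h b := by
        rw [setLIntegral_const, Real.volume_Ioc, mul_comm]
    _ ≤ ∫⁻ t in Ioc a b, h t := setLIntegral_mono' measurableSet_Ioc fun t ht => hh ht.2

theorem Antitone.setLIntegral_Ioc_le_ofReal_mul {h : ℝ → ℝ≥0∞} (hh : Antitone h) {a b : ℝ} :
    ∫⁻ t in Ioc a b, h t ≤ ENNReal.ofReal (b - a) * h a := by
  calc ∫⁻ t in Ioc a b, h t ≤ ∫⁻ _ in Ioc a b, h a :=
        setLIntegral_mono' measurableSet_Ioc fun t ht => hh ht.1.le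
    _ = ENNReal.ofReal (b - a) * h a := by rw [setLIntegral_const, Real.volume_Ioc, mul_comm]

theorem Antitone.sum_ofReal_mul_le_setLIntegral_Ioi {h : ℝ → ℝ≥0∞} (hh : Antitone h) (c : ℝ)
    {ε : ℝ} (hε : 0 < ε) (N : ℕ) :
    ∑ k ∈ Finset.range N, ENNReal.ofReal ε * h (c + (k + 1 : ℕ) * ε) ≤ ∫⁻ t in Ioi c, h t := by
  rw [setLIntegral_Ioi_eq_tsum_Ioc c hε]
  refine (Finset.sum_le_sum fun k _ => ?_).trans (ENNReal.sum_le_tsum _)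
  have := hh.ofReal_mul_le_setLIntegral_Ioc (a := c + k * ε) (b := c + (k + 1 : ℕ) * ε)
  rwa [show c + ((k + 1 : ℕ) : ℝ) * ε - (c + k * ε) = ε by push_cast; ring] at this

theorem Antitone.setLIntegral_Ioi_le_tsum_ofReal_mul {h : ℝ → ℝ≥0∞} (hh : Antitone h) (c : ℝ)
    {ε : ℝ} (hε : 0 < ε) :
    ∫⁻ t in Ioi c, h t ≤ ∑' k : ℕ, ENNReal.ofReal ε * h (c + k * ε) := by
  rw [setLIntegral_Ioi_eq_tsum_Ioc c hε]
  refine ENNReal.tsum_le_tsum fun k => ?_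
  have := hh.setLIntegral_Ioc_le_ofReal_mul (a := c + k * ε) (b := c + (k + 1 : ℕ) * ε)
  rwa [show c + ((k + 1 : ℕ) : ℝ) * ε - (c + k * ε) = ε by push_cast; ring] at this

theorem setLIntegral_Ioi_le_of_forall_gt {h : ℝ → ℝ≥0∞} {c : ℝ} {a : ℝ≥0∞}
    (H : ∀ c' > c, ∫⁻ t in Ioi c', h t ≤ a) : ∫⁻ t in Ioi c, h t ≤ a := by
  have hunion : ⋃ n : ℕ, Ioi (c + 1 / (n + 1)) = Ioi c := by
    ext t
    simp only [mem_iUnion, mem_Ioi]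
    refine ⟨fun ⟨n, hn⟩ => lt_trans (by simp; positivity) hn, fun ht => ?_⟩
    obtain ⟨n, hn⟩ := exists_nat_one_div_lt (sub_pos.2 ht)
    exact ⟨n, by linarith⟩
  rw [← hunion, setLIntegral_iUnion_of_directed _ ?_]
  · exact iSup_le fun n => H _ (by simp; positivity)
  · exact Monotone.directed_le fun m n hmn => Ioi_subset_Ioi (by gcongr)

theorem antitone_measure_setOf_ofReal_le {X : Type*} (ν : OuterMeasure X) (f : X → ℝ≥0∞) :
    Antitone fun t : ℝ => ν {x | ENNReal.ofReal t ≤ f x} :=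
  fun _ _ hst => measure_mono fun _ hx => (ENNReal.ofReal_le_ofReal hst).trans hx

theorem ofReal_mul_sum_le_cavalieriIntegral {X : Type*} (ν : OuterMeasure X) (f : X → ℝ≥0∞)
    {ε : ℝ} (hε : 0 < ε) (N : ℕ) :
    ENNReal.ofReal ε * ∑ i ∈ Finset.range N, ν {x | ENNReal.ofReal ((i + 1 : ℕ) * ε) ≤ f x} ≤
      cavalieriIntegral ν f := by
  simpa only [cavalieriIntegral, Finset.mul_sum, zero_add] using
    (antitone_measure_setOf_ofReal_le ν f).sum_ofReal_mul_le_setLIntegral_Ioi 0 hε N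

theorem cavalieri_subadditive_of_submodular_general
    {X : Type*} [MeasurableSpace X]
    (ν : OuterMeasure X)
    (hsub : ∀ E F : Set X, MeasurableSet E → MeasurableSet F →
      ν (E ∪ F) + ν (E ∩ F) ≤ ν E + ν F)
    (f g : X → ℝ≥0∞) (hf : Measurable f) (hg : Measurable g) :
    cavalieriIntegral ν (f + g) ≤ cavalieriIntegral ν f + cavalieriIntegral ν g := by
  refine setLIntegral_Ioi_le_of_forall_gt fun δ hδ => ?_
  obtain ⟨ε, hε, rfl⟩ : ∃ ε > 0, δ = 2 * ε := ⟨δ / 2, by linarith, by ring⟩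
  refine ((antitone_measure_setOf_ofReal_le ν (f + g)).setLIntegral_Ioi_le_tsum_ofReal_mul _
    hε).trans (ENNReal.tsum_le_of_sum_range_le fun N => ?_)
  calc ∑ k ∈ Finset.range N, ENNReal.ofReal ε * ν {x | ENNReal.ofReal (2 * ε + k * ε) ≤ (f + g) x}
      = ENNReal.ofReal ε *
          ∑ k ∈ Finset.range N, ν {x | ENNReal.ofReal ((k + 2) * ε) ≤ f x + g x} := by
        simp only [Finset.mul_sum, Pi.add_apply, ← add_mul, add_comm (2 : ℝ)]
    _ ≤ ENNReal.ofReal ε * (_ + _) := by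
        gcongr
        exact SubmodularOnMeasurableSets.sum_measure_ofReal_le_add_le hsub hf hg hε.le N
    _ ≤ cavalieriIntegral ν f + cavalieriIntegral ν g := by
        rw [mul_add]
        exact add_le_add (ofReal_mul_sum_le_cavalieriIntegral ν f hε N)
          (ofReal_mul_sum_le_cavalieriIntegral ν g hε N)

/-- If the outer measure `ν` on a metric space `X` is submodular on Borel
sets, then the Cavalieri integral is subadditive on nonnegative Borel functions. -/
theorem cavalieri_subadditive_of_submodular
    {X : Type*} [MetricSpace X] [MeasurableSpace X] [BorelSpace X]
    (ν : OuterMeasure X)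
    (hsub : ∀ E F : Set X, MeasurableSet E → MeasurableSet F →
      ν (E ∪ F) + ν (E ∩ F) ≤ ν E + ν F)
    (f g : X → ℝ≥0∞) (hf : Measurable f) (hg : Measurable g) :
    cavalieriIntegral ν (f + g) ≤ cavalieriIntegral ν f + cavalieriIntegral ν g :=
  cavalieri_subadditive_of_submodular_general ν hsub f g hf hg
end

section
/- Let (Q,𝒬,𝔮) be a measure space and q ↦ μ_q a disjoint measure-valued map from Q to (X,Σ), with μ := ∫ μ_q d𝔮(q). Then the map i_𝔮 : L⁰(μ) → L⁰(𝔮; L⁰(μ_⋆)), sending the class of F to the 𝔮-a.e. class of q ↦ [F]_{μ_q}, is a well-defined linear and ring isomorphism. -/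
/-! The integrated measure is the composition `κ ∘ₘ 𝔮` with the kernel `κ q = μ q`, so a
property holds `μtot`-a.e. iff it holds `μ q`-a.e. for `𝔮`-a.e. `q` (for measurable properties;
one direction holds for all). Hence `F ↦ [q ↦ [F]_{μ q}]` is well defined and injective on
`L⁰(μtot)`, and it commutes with the pointwise operations because their representatives agree
`μtot`-a.e. -/

open MeasureTheory

variable {Q X : Type*} [MeasurableSpace Q] [MeasurableSpace X]

/-- The equivalence relation on families `(f_q)_{q∈Q}` of functions on `X`:
`𝔮`-a.e. `q`, `f q = g q` holds `μ q`-a.e.  Quotienting by it produces the space of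
(`𝔮`-a.e. classes of) families of elements of `L⁰(μ_q)`. -/
def aeFamilySetoid (𝔮 : Measure Q) (μ : Q → Measure X) : Setoid (Q → X → ℝ) where
  r f g := ∀ᵐ q ∂𝔮, f q =ᵐ[μ q] g q
  iseqv := by
    constructor
    · exact fun f => Filter.Eventually.of_forall fun q => Filter.EventuallyEq.refl _ _
    · exact fun h => h.mono fun q hq => hq.symm
    · exact fun h₁ h₂ => (h₁.and h₂).mono fun q hq => hq.1.trans hq.2

open ProbabilityTheory

namespace MeasureTheory.Measure

lemma eq_comp_of_apply_eq_lintegral {𝔮 : Measure Q} {μ : Q → Measure X} {ν : Measure X}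
    (hmeas : ∀ E : Set X, MeasurableSet E → Measurable fun q => μ q E)
    (hν : ∀ E : Set X, MeasurableSet E → ν E = ∫⁻ q, μ q E ∂𝔮) :
    ν = (⟨μ, measurable_of_measurable_coe μ hmeas⟩ : Kernel Q X) ∘ₘ 𝔮 := by
  ext E hE
  rw [hν E hE, bind_apply hE (Kernel.aemeasurable _)]
  rfl

lemma ae_ae_of_ae_of_apply_eq_lintegral {𝔮 : Measure Q} {μ : Q → Measure X} {ν : Measure X}
    (hmeas : ∀ E : Set X, MeasurableSet E → Measurable fun q => μ q E)
    (hν : ∀ E : Set X, MeasurableSet E → ν E = ∫⁻ q, μ q E ∂𝔮)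
    {p : X → Prop} (h : ∀ᵐ x ∂ν, p x) : ∀ᵐ q ∂𝔮, ∀ᵐ x ∂μ q, p x := by
  rw [eq_comp_of_apply_eq_lintegral hmeas hν] at h
  exact ae_ae_of_ae_comp h

lemma ae_of_ae_ae_of_apply_eq_lintegral {𝔮 : Measure Q} {μ : Q → Measure X} {ν : Measure X}
    (hmeas : ∀ E : Set X, MeasurableSet E → Measurable fun q => μ q E)
    (hν : ∀ E : Set X, MeasurableSet E → ν E = ∫⁻ q, μ q E ∂𝔮)
    {p : X → Prop} (hp : MeasurableSet {x | p x}) (h : ∀ᵐ q ∂𝔮, ∀ᵐ x ∂μ q, p x) :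
    ∀ᵐ x ∂ν, p x := by
  rw [eq_comp_of_apply_eq_lintegral hmeas hν]
  exact ae_comp_of_ae_ae hp h

end MeasureTheory.Measure

open Measure

lemma MeasureTheory.AEEqFun.ext_of_ae_ae_eq {β : Type*} [TopologicalSpace β]
    [TopologicalSpace.MetrizableSpace β] {𝔮 : Measure Q} {μ : Q → Measure X} {ν : Measure X}
    (hmeas : ∀ E : Set X, MeasurableSet E → Measurable fun q => μ q E)
    (hν : ∀ E : Set X, MeasurableSet E → ν E = ∫⁻ q, μ q E ∂𝔮)
    {F G : X →ₘ[ν] β} (h : ∀ᵐ q ∂𝔮, F =ᵐ[μ q] G) : F = G := by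
  -- `{F = G}` need not be measurable, so pass to strongly measurable representatives
  set F' := F.aestronglyMeasurable.mk F
  set G' := G.aestronglyMeasurable.mk G
  have hF : ⇑F =ᵐ[ν] F' := F.aestronglyMeasurable.ae_eq_mk
  have hG : ⇑G =ᵐ[ν] G' := G.aestronglyMeasurable.ae_eq_mk
  have h' : ∀ᵐ q ∂𝔮, F' =ᵐ[μ q] G' := by
    filter_upwards [h, ae_ae_of_ae_of_apply_eq_lintegral hmeas hν hF,
      ae_ae_of_ae_of_apply_eq_lintegral hmeas hν hG] with q hFG hFq hGq
    exact (Filter.EventuallyEq.symm hFq).trans (hFG.trans hGq)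
  have hF'G' : F' =ᵐ[ν] G' := ae_of_ae_ae_of_apply_eq_lintegral hmeas hν
    (F.aestronglyMeasurable.stronglyMeasurable_mk.measurableSet_eq_fun
      G.aestronglyMeasurable.stronglyMeasurable_mk) h'
  exact AEEqFun.ext (hF.trans (hF'G'.trans hG.symm))

lemma aeFamilySetoid_mk_const_eq_of_ae_eq {𝔮 : Measure Q} {μ : Q → Measure X} {ν : Measure X}
    (hmeas : ∀ E : Set X, MeasurableSet E → Measurable fun q => μ q E)
    (hν : ∀ E : Set X, MeasurableSet E → ν E = ∫⁻ q, μ q E ∂𝔮)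
    {f g : X → ℝ} (h : f =ᵐ[ν] g) :
    Quotient.mk (aeFamilySetoid 𝔮 μ) (fun _ => f) = Quotient.mk (aeFamilySetoid 𝔮 μ) fun _ => g :=
  Quotient.sound (ae_ae_of_ae_of_apply_eq_lintegral hmeas hν h)

theorem i_q_linear_ring_isomorphism_general
    (𝔮 : Measure Q) (μ : Q → Measure X)
    (hmeas : ∀ E : Set X, MeasurableSet E → Measurable fun q => μ q E)
    (μtot : Measure X)
    (hμtot : ∀ E : Set X, MeasurableSet E → μtot E = ∫⁻ q, μ q E ∂𝔮)
    (i : (X →ₘ[μtot] ℝ) → Quotient (aeFamilySetoid 𝔮 μ))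
    (hi : ∀ F : X →ₘ[μtot] ℝ, i F = Quotient.mk (aeFamilySetoid 𝔮 μ) fun _ => ⇑F) :
    -- `i_𝔮` is injective,
    Function.Injective i ∧
    -- its image is exactly `L⁰(𝔮 ; L⁰(μ_⋆))`, i.e. the classes of families admitting
    -- a single measurable representative,
    (∀ f : Q → X → ℝ,
      (∃ F : X → ℝ, Measurable F ∧ ∀ᵐ q ∂𝔮, f q =ᵐ[μ q] F) →
      ∃ G : X →ₘ[μtot] ℝ, i G = Quotient.mk (aeFamilySetoid 𝔮 μ) f) ∧
    (∀ F : X →ₘ[μtot] ℝ, ∃ f : Q → X → ℝ,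
      i F = Quotient.mk (aeFamilySetoid 𝔮 μ) f ∧
      ∃ G : X → ℝ, Measurable G ∧ ∀ᵐ q ∂𝔮, f q =ᵐ[μ q] G) ∧
    -- and it is linear and multiplicative.
    (∀ F G : X →ₘ[μtot] ℝ,
      i (F + G) = Quotient.mk (aeFamilySetoid 𝔮 μ) fun q x => F x + G x) ∧
    (∀ (c : ℝ) (F : X →ₘ[μtot] ℝ),
      i (c • F) = Quotient.mk (aeFamilySetoid 𝔮 μ) fun q x => c * F x) ∧
    (∀ F G : X →ₘ[μtot] ℝ,
      i (F * G) = Quotient.mk (aeFamilySetoid 𝔮 μ) fun q x => F x * G x) := by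
  have hmk {f g : X → ℝ} (h : f =ᵐ[μtot] g) :=
    aeFamilySetoid_mk_const_eq_of_ae_eq (𝔮 := 𝔮) hmeas hμtot h
  refine ⟨fun F G hFG => ?_, fun f ⟨F, hFm, hF⟩ => ⟨AEEqFun.mk F hFm.aestronglyMeasurable, ?_⟩,
    fun F => ⟨_, hi F, _, F.aestronglyMeasurable.stronglyMeasurable_mk.measurable,
      ae_ae_of_ae_of_apply_eq_lintegral hmeas hμtot F.aestronglyMeasurable.ae_eq_mk⟩,
    fun F G => ?_, fun c F => ?_, fun F G => ?_⟩
  · rw [hi, hi] at hFG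
    exact AEEqFun.ext_of_ae_ae_eq hmeas hμtot (Quotient.exact hFG)
  · rw [hi, hmk (AEEqFun.coeFn_mk F _)]
    exact Quotient.sound (hF.mono fun _ h => h.symm)
  · rw [hi, hmk (AEEqFun.coeFn_add F G)]
    rfl
  · rw [hi, hmk (AEEqFun.coeFn_smul c F)]
    rfl
  · rw [hi, hmk (AEEqFun.coeFn_mul F G)]
    rfl

/-- Let `q ↦ μ q` be a *disjoint* measure-valued map from `(Q,𝒬,𝔮)`
to `(X,Σ)` with integrated (σ-finite) measure `μtot = ∫ μ_q d𝔮(q)`.  The map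
`i_𝔮 : L⁰(μtot) → L⁰(𝔮 ; L⁰(μ_⋆))` sending the class of `F` to the `𝔮`-a.e. class of
`q ↦ [F]_{μ q}` is a well-defined linear and ring isomorphism onto the space of those
classes of families admitting a common measurable representative. -/
theorem i_q_linear_ring_isomorphism
    (𝔮 : Measure Q) (μ : Q → Measure X)
    (hmeas : ∀ E : Set X, MeasurableSet E → Measurable fun q => μ q E)
    -- disjointness: pairwise disjoint carriers with measurable unions
    (car : Q → Set X) (hcar : ∀ q, MeasurableSet (car q))
    (hdisj : Pairwise (Function.onFun Disjoint car))
    (hcar0 : ∀ q, μ q (Set.univ \ car q) = 0)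
    (hcarU : ∀ A : Set Q, MeasurableSet A → MeasurableSet (⋃ q ∈ A, car q))
    (μtot : Measure X) [SigmaFinite μtot]
    (hμtot : ∀ E : Set X, MeasurableSet E → μtot E = ∫⁻ q, μ q E ∂𝔮)
    (i : (X →ₘ[μtot] ℝ) → Quotient (aeFamilySetoid 𝔮 μ))
    (hi : ∀ F : X →ₘ[μtot] ℝ, i F = Quotient.mk (aeFamilySetoid 𝔮 μ) fun _ => ⇑F) :
    -- `i_𝔮` is injective,
    Function.Injective i ∧
    -- its image is exactly `L⁰(𝔮 ; L⁰(μ_⋆))`, i.e. the classes of families admitting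
    -- a single measurable representative,
    (∀ f : Q → X → ℝ,
      (∃ F : X → ℝ, Measurable F ∧ ∀ᵐ q ∂𝔮, f q =ᵐ[μ q] F) →
      ∃ G : X →ₘ[μtot] ℝ, i G = Quotient.mk (aeFamilySetoid 𝔮 μ) f) ∧
    (∀ F : X →ₘ[μtot] ℝ, ∃ f : Q → X → ℝ,
      i F = Quotient.mk (aeFamilySetoid 𝔮 μ) f ∧
      ∃ G : X → ℝ, Measurable G ∧ ∀ᵐ q ∂𝔮, f q =ᵐ[μ q] G) ∧
    -- and it is linear and multiplicative.
    (∀ F G : X →ₘ[μtot] ℝ,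
      i (F + G) = Quotient.mk (aeFamilySetoid 𝔮 μ) fun q x => F x + G x) ∧
    (∀ (c : ℝ) (F : X →ₘ[μtot] ℝ),
      i (c • F) = Quotient.mk (aeFamilySetoid 𝔮 μ) fun q x => c * F x) ∧
    (∀ F G : X →ₘ[μtot] ℝ,
      i (F * G) = Quotient.mk (aeFamilySetoid 𝔮 μ) fun q x => F x * G x) :=
  i_q_linear_ring_isomorphism_general 𝔮 μ hmeas μtot hμtot i hi
end

section
/- Let (X,d,𝔪) be an isotropic PI space and f ∈ BV(X). With the index space Q = ℝ ⊔ ℕ carrying the measure 𝔮 = Lebesgue on ℝ plus counting on ℕ, and with μ^f_t := P({f̄>t},·)|_{X_f∖J_f} for t ∈ ℝ and μ^f_n := (f^∨−f^∧) P({f̄>t_n},·)|_{Γ_n} for n ∈ ℕ (where (Γ_n) is a Borel partition of J_f with Γ_n ⊆ ∂*{f̄>t_n}), one has |Df| = ∫ μ^f_q d𝔮(q). -/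
/-! Split `E` along the jump set. Off `J_f`, the coarea formula gives `|Df|(E ∖ J_f)` directly, and
intersecting with `X_f` costs nothing: a `|Df|`-null set is `P({f̄>t},·)`-null for a.e. `t`, because
`|Df|` is the integral of these perimeters. On `J_f = ⋃ Γ_n`, countable additivity reduces to
`|Df|(E ∩ Γ_n)`, and isotropy evaluates it since `Γ_n ⊆ J_f ∩ ∂*{f̄>t_n}`. -/

open MeasureTheory Metric Filter Topology ENNReal

variable {X : Type*} [MetricSpace X] [MeasurableSpace X] [BorelSpace X]

/-- The asymptotic (Lipschitz) slope `lip_a f (x) = limsup_{y,z→x} |f y − f z| / d(y,z)`;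
it vanishes at isolated points. -/
noncomputable def asympSlope (f : X → ℝ) (x : X) : ℝ≥0∞ :=
  ⨅ (r : ℝ) (_ : 0 < r), ⨆ (y : X) (_ : y ∈ ball x r) (z : X) (_ : z ∈ ball x r) (_ : y ≠ z),
    ENNReal.ofReal (|f y - f z| / dist y z)

/-- Locally Lipschitz functions on a set `U`. -/
def LocLipschitzOn (f : X → ℝ) (U : Set X) : Prop :=
  ∀ x ∈ U, ∃ r : ℝ, 0 < r ∧ ∃ K : NNReal, LipschitzOnWith K f (ball x r ∩ U)

/-- Convergence in `L¹_loc(U)`. -/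
def TendstoL1Loc (m : Measure X) (F : ℕ → X → ℝ) (f : X → ℝ) (U : Set X) : Prop :=
  ∀ K : Set X, IsCompact K → K ⊆ U →
    Tendsto (fun n => ∫⁻ x in K, ENNReal.ofReal |F n x - f x| ∂m) atTop (𝓝 0)

/-- The total variation `|Df|(U)` of `f` on `U`, defined by relaxation of the asymptotic
slope of locally Lipschitz, locally integrable approximations. -/
noncomputable def totalVariationOn (m : Measure X) (f : X → ℝ) (U : Set X) : ℝ≥0∞ :=
  ⨅ (F : ℕ → X → ℝ) (_ : ∀ n, LocLipschitzOn (F n) U)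
    (_ : ∀ n, ∫⁻ x in U, ENNReal.ofReal |F n x| ∂m ≠ ⊤)
    (_ : TendstoL1Loc m F f U),
    Filter.liminf (fun n => ∫⁻ x in U, asympSlope (F n) x ∂m) Filter.atTop

/-- `f ∈ BV(X)`. -/
def IsBV (m : Measure X) (f : X → ℝ) : Prop :=
  Integrable f m ∧ totalVariationOn m f Set.univ ≠ ⊤

/-- The upper density `Θ*(E,x) = limsup_{r↓0} m(E ∩ B_r(x)) / m(B_r(x))`. -/
noncomputable def upperDensity (m : Measure X) (E : Set X) (x : X) : ℝ≥0∞ :=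
  Filter.limsup (fun r : ℝ => m (E ∩ ball x r) / m (ball x r)) (𝓝[>] (0:ℝ))

/-- The essential boundary `∂*E`. -/
def essBoundary (m : Measure X) (E : Set X) : Set X :=
  {x | 0 < upperDensity m E x ∧ 0 < upperDensity m Eᶜ x}

/-- The approximate lower limit `f^∧`. -/
noncomputable def approxLower (m : Measure X) (f : X → ℝ) (x : X) : EReal :=
  sSup (Real.toEReal '' {t : ℝ | upperDensity m {y | f y < t} x = 0})

/-- The approximate upper limit `f^∨`. -/
noncomputable def approxUpper (m : Measure X) (f : X → ℝ) (x : X) : EReal :=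
  sInf (Real.toEReal '' {t : ℝ | upperDensity m {y | t < f y} x = 0})

/-- The set `X_f = {f^∧ > −∞} ∩ {f^∨ < +∞}` where the precise representative is defined. -/
def domPrecise (m : Measure X) (f : X → ℝ) : Set X :=
  {x | ⊥ < approxLower m f x ∧ approxUpper m f x < ⊤}

/-- The precise representative `f̄ = (f^∧ + f^∨)/2` (junk outside `X_f`). -/
noncomputable def preciseRep (m : Measure X) (f : X → ℝ) (x : X) : ℝ :=
  ((approxLower m f x).toReal + (approxUpper m f x).toReal) / 2

/-- The jump set `J_f = {f^∧ < f^∨}`. -/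
def jumpSet (m : Measure X) (f : X → ℝ) : Set X :=
  {x ∈ domPrecise m f | approxLower m f x < approxUpper m f x}

/-- The superlevel set `{f̄ > t}` of the precise representative. -/
def superlevelBar (m : Measure X) (f : X → ℝ) (t : ℝ) : Set X :=
  {x ∈ domPrecise m f | t < preciseRep m f x}

/-- Uniformly locally doubling measure. -/
def UniformlyLocallyDoubling (m : Measure X) : Prop :=
  ∃ C : ℝ → ℝ≥0∞, Monotone C ∧ ∀ R : ℝ, 0 < R → ∀ r : ℝ, 0 < r → r < R → ∀ x : X,
    m (ball x (2 * r)) ≤ C R * m (ball x r)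

/-- Weak local `(1,1)`-Poincaré inequality. -/
def WeakPoincare11 (m : Measure X) : Prop :=
  ∃ lam : ℝ, 1 ≤ lam ∧ ∃ C : ℝ → ℝ≥0∞, Monotone C ∧
    ∀ f : X → ℝ, (∃ K : NNReal, LipschitzWith K f) →
    ∀ R : ℝ, 0 < R → ∀ r : ℝ, 0 < r → r < R → ∀ x : X,
      (m (ball x r))⁻¹ *
          ∫⁻ y in ball x r, ENNReal.ofReal |f y - ⨍ z in ball x r, f z ∂m| ∂m ≤
        C R * ENNReal.ofReal r *
          ((m (ball x (lam * r)))⁻¹ * ∫⁻ y in ball x (lam * r), asympSlope f y ∂m)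

/-- PI space: uniformly locally doubling and supporting a weak `(1,1)`-Poincaré inequality. -/
def IsPIspace (m : Measure X) : Prop :=
  UniformlyLocallyDoubling m ∧ WeakPoincare11 m

/-- The jump `f^∨ − f^∧` of a BV function (as a nonnegative extended number, junk where
the approximate limits are infinite). -/
noncomputable def jumpGap {X : Type*} [MetricSpace X] [MeasurableSpace X] [BorelSpace X]
    (m : Measure X) (f : X → ℝ) (x : X) : ℝ≥0∞ :=
  ENNReal.ofReal ((approxUpper m f x).toReal - (approxLower m f x).toReal)

section Disintegration

variable {α ι : Type*} [MeasurableSpace α] [MeasurableSpace ι] {μ : Measure ι} {ν : Measure α}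
  {P : ι → Measure α}

theorem ae_measure_eq_zero_of_eq_lintegral
    (hP : ∀ E, MeasurableSet E → Measurable fun t => P t E)
    (hν : ∀ E, MeasurableSet E → ν E = ∫⁻ t, P t E ∂μ) {N : Set α} (hN : ν N = 0) :
    ∀ᵐ t ∂μ, P t N = 0 := by
  have hS : MeasurableSet (toMeasurable ν N) := measurableSet_toMeasurable ν N
  have hint : ∫⁻ t, P t (toMeasurable ν N) ∂μ = 0 := by
    rw [← hν _ hS, measure_toMeasurable, hN]
  filter_upwards [(lintegral_eq_zero_iff (hP _ hS)).mp hint] with t ht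
  exact measure_mono_null (subset_toMeasurable ν N) ht

theorem measure_eq_lintegral_inter_of_compl_null
    (hP : ∀ E, MeasurableSet E → Measurable fun t => P t E)
    (hν : ∀ E, MeasurableSet E → ν E = ∫⁻ t, P t E ∂μ) {A : Set α} (hA : ν Aᶜ = 0)
    {E : Set α} (hE : MeasurableSet E) :
    ν E = ∫⁻ t, P t (E ∩ A) ∂μ := by
  rw [hν E hE]
  refine lintegral_congr_ae ?_
  filter_upwards [ae_measure_eq_zero_of_eq_lintegral hP hν hA] with t ht
  exact (measure_inter_conull ht).symm

end Disintegration

theorem coarea_decomposition_with_jump_part_general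
    {X : Type*} [MetricSpace X] [MeasurableSpace X] [BorelSpace X]
    (m : Measure X)
    (f : X → ℝ)
    -- the perimeter measures of the superlevel sets
    (P : ℝ → Measure X)
    (hP_meas : ∀ E : Set X, MeasurableSet E → Measurable fun t => P t E)
    -- the total variation measure `|Df|`, the coarea formula, and `|Df|(X∖X_f) = 0`
    (DF : Measure X)
    (hcoarea : ∀ E : Set X, MeasurableSet E →
      DF E = ∫⁻ t, P t E ∂(volume : Measure ℝ))
    (hDF_dom : DF (Set.univ \ domPrecise m f) = 0)
    -- the Borel partition `(Γ n)` of the jump set, `Γ n ⊆ ∂*{f̄ > t_n}`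
    (Γ : ℕ → Set X) (tseq : ℕ → ℝ)
    (hΓ_meas : ∀ n, MeasurableSet (Γ n))
    (hΓ_disj : Pairwise (Function.onFun Disjoint Γ))
    (hΓ_union : (⋃ n, Γ n) = jumpSet m f)
    (hΓ_sub : ∀ n, Γ n ⊆ essBoundary m (superlevelBar m f (tseq n)))
    -- isotropy, via its consequence (2.9) on the superlevel sets:
    -- `|Df||_{J_f ∩ ∂*{f̄>t}} = (f^∨ − f^∧) P({f̄>t},·)|_{J_f}`
    (hisotropic : ∀ (t : ℝ) (E : Set X), MeasurableSet E →
      DF (E ∩ jumpSet m f ∩ essBoundary m (superlevelBar m f t)) =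
        ∫⁻ x in E ∩ jumpSet m f, jumpGap m f x ∂(P t)) :
    ∀ E : Set X, MeasurableSet E →
      DF E = (∫⁻ t, P t (E ∩ (domPrecise m f \ jumpSet m f)) ∂(volume : Measure ℝ)) +
        ∑' n : ℕ, ∫⁻ x in E ∩ Γ n, jumpGap m f x ∂(P (tseq n)) := by
  intro E hE
  have hJ_meas : MeasurableSet (jumpSet m f) := hΓ_union ▸ MeasurableSet.iUnion hΓ_meas
  have hdiffuse : DF (E \ jumpSet m f) =
      ∫⁻ t, P t (E ∩ (domPrecise m f \ jumpSet m f)) ∂(volume : Measure ℝ) := by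
    rw [measure_eq_lintegral_inter_of_compl_null hP_meas hcoarea
      (by rwa [Set.compl_eq_univ_sdiff]) (hE.diff hJ_meas),
      Set.sdiff_inter_right_comm, Set.inter_sdiff_assoc]
  have hjump_piece : ∀ n, DF (E ∩ Γ n) = ∫⁻ x in E ∩ Γ n, jumpGap m f x ∂(P (tseq n)) := by
    intro n
    have hΓJ : E ∩ Γ n ⊆ jumpSet m f := fun x hx => hΓ_union ▸ Set.mem_iUnion_of_mem n hx.2
    have hΓ_bdry : E ∩ Γ n ⊆ essBoundary m (superlevelBar m f (tseq n)) := fun x hx => hΓ_sub n hx.2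
    simpa only [Set.inter_eq_left.mpr hΓJ, Set.inter_eq_left.mpr hΓ_bdry]
      using hisotropic (tseq n) (E ∩ Γ n) (hE.inter (hΓ_meas n))
  have hjump : DF (E ∩ jumpSet m f) = ∑' n, DF (E ∩ Γ n) := by
    rw [← hΓ_union, Set.inter_iUnion]
    exact measure_iUnion (fun i j hij => (hΓ_disj hij).mono Set.inter_subset_right
      Set.inter_subset_right) (fun n => hE.inter (hΓ_meas n))
  rw [← measure_sdiff_add_inter (μ := DF) E hJ_meas, hdiffuse, hjump]
  simp only [hjump_piece]

/-- Let `(X,d,𝔪)` be an isotropic PI space and `f ∈ BV(X)`.  Let `P t`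
be the perimeter measure of `{f̄ > t}`, satisfying the coarea formula for `|Df|`, and let
`(Γ n)` be a Borel partition of the jump set `J_f` with `Γ n ⊆ ∂*{f̄ > t_n}`.  Isotropy
yields `|Df||_{J_f ∩ ∂*{f̄>t_n}} = (f^∨−f^∧) P(t_n,·)|_{J_f}` (hypothesis `hisotropic`).
Then, with the index space `Q = ℝ ⊔ ℕ` carrying Lebesgue plus counting measure and
`μ^f_t = P({f̄>t},·)|_{X_f∖J_f}`, `μ^f_n = (f^∨−f^∧) P({f̄>t_n},·)|_{Γ_n}`, one has
`|Df| = ∫ μ^f_q d𝔮(q)`, i.e. for every Borel `E`: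
`|Df|(E) = ∫_ℝ P t (E ∩ (X_f∖J_f)) dt + ∑_n ∫_{E∩Γ_n} (f^∨−f^∧) dP(t_n,·)`. -/
theorem coarea_decomposition_with_jump_part
    {X : Type*} [MetricSpace X] [MeasurableSpace X] [BorelSpace X]
    [CompleteSpace X] [TopologicalSpace.SeparableSpace X]
    (m : Measure X) (hbf : ∀ (x : X) (r : ℝ), m (ball x r) ≠ ⊤)
    (hPI : IsPIspace m)
    (f : X → ℝ) (hf : IsBV m f)
    -- the perimeter measures of the superlevel sets
    (P : ℝ → Measure X)
    (hP_open : ∀ (t : ℝ) (U : Set X), IsOpen U →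
      P t U = totalVariationOn m (Set.indicator (superlevelBar m f t) fun _ => (1:ℝ)) U)
    (hP_conc : ∀ t : ℝ, P t (essBoundary m (superlevelBar m f t))ᶜ = 0)
    (hP_meas : ∀ E : Set X, MeasurableSet E → Measurable fun t => P t E)
    -- the total variation measure `|Df|`, the coarea formula, and `|Df|(X∖X_f) = 0`
    (DF : Measure X) [IsFiniteMeasure DF]
    (hDF_open : ∀ U : Set X, IsOpen U → DF U = totalVariationOn m f U)
    (hcoarea : ∀ E : Set X, MeasurableSet E →
      DF E = ∫⁻ t, P t E ∂(volume : Measure ℝ))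
    (hDF_dom : DF (Set.univ \ domPrecise m f) = 0)
    -- the Borel partition `(Γ n)` of the jump set, `Γ n ⊆ ∂*{f̄ > t_n}`
    (Γ : ℕ → Set X) (tseq : ℕ → ℝ)
    (hΓ_meas : ∀ n, MeasurableSet (Γ n))
    (hΓ_disj : Pairwise (Function.onFun Disjoint Γ))
    (hΓ_union : (⋃ n, Γ n) = jumpSet m f)
    (hΓ_sub : ∀ n, Γ n ⊆ essBoundary m (superlevelBar m f (tseq n)))
    -- isotropy, via its consequence (2.9) on the superlevel sets:
    -- `|Df||_{J_f ∩ ∂*{f̄>t}} = (f^∨ − f^∧) P({f̄>t},·)|_{J_f}`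
    (hisotropic : ∀ (t : ℝ) (E : Set X), MeasurableSet E →
      DF (E ∩ jumpSet m f ∩ essBoundary m (superlevelBar m f t)) =
        ∫⁻ x in E ∩ jumpSet m f, jumpGap m f x ∂(P t)) :
    ∀ E : Set X, MeasurableSet E →
      DF E = (∫⁻ t, P t (E ∩ (domPrecise m f \ jumpSet m f)) ∂(volume : Measure ℝ)) +
        ∑' n : ℕ, ∫⁻ x in E ∩ Γ n, jumpGap m f x ∂(P (tseq n)) :=
  coarea_decomposition_with_jump_part_general m f P hP_meas DF hcoarea hDF_dom Γ tseq hΓ_meas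
    hΓ_disj hΓ_union hΓ_sub hisotropic
end

section
/- Let (X,d,𝔪) be an RCD(K,N) space. For every Borel function f : X → ℝ and every ε > 0, there exist a Borel partition (E_n)_{n∈ℕ} of X and test functions (f_n)_{n∈ℕ} ⊆ Test(X) such that |f(x) − f_n(x)| ≤ ε for every n ∈ ℕ and x ∈ E_n. In particular, Test(X) generates L⁰(Cap). -/
/-!
Cut `X` into the countably many bounded Borel cells on which both `⌊f / ε⌋` and
`⌊d(·, x₀)⌋` are constant. On the cell where `⌊f / ε⌋ = k`, the function `f` lies within `ε`
of the constant `k ε`, and a test cut-off function equal to `k ε` on a ball containing the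
cell approximates `f` there.
-/

open MeasureTheory Metric

section Partition

variable {X ι : Type*} [MeasurableSpace X] [Denumerable ι]

theorem exists_nat_partition_approx_of_fibers {φ : X → ι} (hφ : ∀ i, MeasurableSet (φ ⁻¹' {i}))
    (f : X → ℝ) (ε : ℝ) (S : Set (X → ℝ)) (g : ι → X → ℝ) (hgS : ∀ i, g i ∈ S)
    (hfg : ∀ i, ∀ x ∈ φ ⁻¹' {i}, |f x - g i x| ≤ ε) :
    ∃ (E : ℕ → Set X) (g : ℕ → X → ℝ),
      (∀ n, MeasurableSet (E n)) ∧ Pairwise (Function.onFun Disjoint E) ∧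
      (⋃ n, E n) = Set.univ ∧ (∀ n, g n ∈ S) ∧
      ∀ (n : ℕ), ∀ x ∈ E n, |f x - g n x| ≤ ε := by
  let e : ℕ ≃ ι := (Denumerable.eqv ι).symm
  refine ⟨fun n => φ ⁻¹' {e n}, fun n => g (e n), fun n => hφ _,
    (pairwise_disjoint_fiber φ).comp_of_injective e.injective, ?_, fun n => hgS _,
    fun n => hfg _⟩
  exact Set.eq_univ_of_forall fun x => Set.mem_iUnion.2 ⟨e.symm (φ x), by simp⟩

end Partition

theorem abs_sub_floor_div_mul_le (a : ℝ) {ε : ℝ} (hε : 0 < ε) : |a - ⌊a / ε⌋ * ε| ≤ ε :=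
  abs_le.2 ⟨by linarith [Int.sub_floor_div_mul_nonneg a hε],
    (Int.sub_floor_div_mul_lt a hε).le⟩

section Grid

variable {X : Type*} [PseudoMetricSpace X]

noncomputable def gridIndex (f : X → ℝ) (ε : ℝ) (x₀ x : X) : ℤ × ℕ :=
  (⌊f x / ε⌋, ⌊dist x x₀⌋₊)

theorem measurable_gridIndex [MeasurableSpace X] [OpensMeasurableSpace X] {f : X → ℝ}
    (hf : Measurable f) (ε : ℝ) (x₀ : X) : Measurable (gridIndex f ε x₀) :=
  (hf.div_const ε).floor.prodMk (continuous_id.dist continuous_const).measurable.nat_floor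

theorem isBounded_gridIndex_fiber (f : X → ℝ) (ε : ℝ) (x₀ : X) (p : ℤ × ℕ) :
    Bornology.IsBounded (gridIndex f ε x₀ ⁻¹' {p}) := by
  refine (isBounded_ball (x := x₀) (r := p.2 + 1)).subset fun x hx => ?_
  rw [Set.mem_preimage, Set.mem_singleton_iff, gridIndex, Prod.ext_iff] at hx
  rw [mem_ball, ← hx.2]
  exact Nat.lt_floor_add_one _

end Grid

theorem test_functions_generate_general
    {X : Type*} [MetricSpace X] [MeasurableSpace X] [BorelSpace X]
    [Nonempty X]
    (Test : Set (X → ℝ))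
    (hcutoff : ∀ (E : Set X), MeasurableSet E → Bornology.IsBounded E → ∀ lam : ℝ,
      ∃ g ∈ Test, ∃ (x : X) (r : ℝ), 0 < r ∧ E ⊆ ball x r ∧ ∀ y ∈ ball x r, g y = lam) :
    ∀ f : X → ℝ, Measurable f → ∀ ε : ℝ, 0 < ε →
      ∃ (E : ℕ → Set X) (g : ℕ → X → ℝ),
        (∀ n, MeasurableSet (E n)) ∧ Pairwise (Function.onFun Disjoint E) ∧
        (⋃ n, E n) = Set.univ ∧ (∀ n, g n ∈ Test) ∧
        ∀ (n : ℕ), ∀ x ∈ E n, |f x - g n x| ≤ ε := by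
  intro f hf ε hε
  obtain ⟨x₀⟩ := ‹Nonempty X›
  have hfiber : ∀ p, MeasurableSet (gridIndex f ε x₀ ⁻¹' {p}) := fun p =>
    measurable_gridIndex hf ε x₀ (measurableSet_singleton p)
  choose g hgTest c r _ hsub hg using fun p : ℤ × ℕ =>
    hcutoff _ (hfiber p) (isBounded_gridIndex_fiber f ε x₀ p) (p.1 * ε)
  refine exists_nat_partition_approx_of_fibers hfiber f ε Test g hgTest fun p x hx => ?_
  rw [hg p x (hsub p hx), ← (Prod.ext_iff.1 hx).1]
  exact abs_sub_floor_div_mul_le (f x) hε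

/-- Let `(X,d,𝔪)` be an `RCD(K,N)` space and let `Test(X)` denote its
algebra of test functions.  The `RCD` structure enters only through the
Ambrosio–Mondino–Savaré cut-off property: for every bounded Borel set `E` and every
constant `λ`, there is a test function equal to `λ` on an open ball containing `E`
(hypothesis `hcutoff`).  Then for every Borel function `f : X → ℝ` and every `ε > 0`
there are a Borel partition `(E_n)` of `X` and test functions `(f_n) ⊆ Test(X)` with
`|f(x) − f_n(x)| ≤ ε` for all `n` and all `x ∈ E_n`.  In particular, `Test(X)` generates
`L⁰(Cap)`: every Borel function is uniformly approximated by countable glueings of test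
functions along Borel partitions. -/
theorem test_functions_generate
    {X : Type*} [MetricSpace X] [MeasurableSpace X] [BorelSpace X]
    [CompleteSpace X] [TopologicalSpace.SeparableSpace X] [Nonempty X]
    (m : Measure X) (hbf : ∀ (x : X) (r : ℝ), m (ball x r) ≠ ⊤)
    (Test : Set (X → ℝ))
    (hcutoff : ∀ (E : Set X), MeasurableSet E → Bornology.IsBounded E → ∀ lam : ℝ,
      ∃ g ∈ Test, ∃ (x : X) (r : ℝ), 0 < r ∧ E ⊆ ball x r ∧ ∀ y ∈ ball x r, g y = lam) :
    ∀ f : X → ℝ, Measurable f → ∀ ε : ℝ, 0 < ε →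
      ∃ (E : ℕ → Set X) (g : ℕ → X → ℝ),
        (∀ n, MeasurableSet (E n)) ∧ Pairwise (Function.onFun Disjoint E) ∧
        (⋃ n, E n) = Set.univ ∧ (∀ n, g n ∈ Test) ∧
        ∀ (n : ℕ), ∀ x ∈ E n, |f x - g n x| ≤ ε :=
  test_functions_generate_general Test hcutoff
end
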